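/- Given integers i ≥ 0, m ≥ 0 and s with 0 ≤ s ≤ m: the number of pairs of nonnegative integers (a,b) satisfying either (a+b+s ≥ m and a+2b+s = m+i) or (a+b+(2m+1−s) ≥ m and a+2b+(2m+1−s) = m+i) equals i+1. -/
import Mathlib

lemma aux_eq (N B : ℕ) :
    {p : ℕ × ℕ | p.1 + 2 * p.2 = N ∧ p.2 ≤ B} =
      (fun b => (N - 2 * b, b)) '' Set.Iic (min B (N / 2)) := by
  ext ⟨a, b⟩
  simp only [Set.mem_setOf_eq, Set.mem_image, Set.mem_Iic, Prod.mk.injEq]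
  constructor
  · rintro ⟨h1, h2⟩
    exact ⟨b, by omega, by omega, rfl⟩
  · rintro ⟨x, hx, h1, rfl⟩
    omega

lemma aux_fin (N B : ℕ) : {p : ℕ × ℕ | p.1 + 2 * p.2 = N ∧ p.2 ≤ B}.Finite := by
  rw [aux_eq]
  exact (Set.finite_Iic _).image _

lemma aux_card (N B : ℕ) :
    Set.ncard {p : ℕ × ℕ | p.1 + 2 * p.2 = N ∧ p.2 ≤ B} = min B (N / 2) + 1 := by
  rw [aux_eq, Set.ncard_image_of_injective _ (fun x y h => (Prod.mk.injEq _ _ _ _).mp h |>.2)]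
  rw [← Finset.coe_Iic, Set.ncard_coe_finset, Nat.card_Iic]

theorem stmt15 (m s i : ℕ) (hs : s ≤ m) :
    Set.ncard {p : ℕ × ℕ |
        (m ≤ p.1 + p.2 + s ∧ p.1 + 2 * p.2 + s = m + i) ∨
        (m ≤ p.1 + p.2 + (2 * m + 1 - s) ∧ p.1 + 2 * p.2 + (2 * m + 1 - s) = m + i)}
      = i + 1 := by
  obtain ⟨t, rfl⟩ : ∃ t, m = s + t := ⟨m - s, by omega⟩
  by_cases hit : i ≤ t
  · have hset : {p : ℕ × ℕ |
        (s + t ≤ p.1 + p.2 + s ∧ p.1 + 2 * p.2 + s = s + t + i) ∨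
        (s + t ≤ p.1 + p.2 + (2 * (s + t) + 1 - s) ∧
          p.1 + 2 * p.2 + (2 * (s + t) + 1 - s) = s + t + i)} =
        {p : ℕ × ℕ | p.1 + 2 * p.2 = t + i ∧ p.2 ≤ i} := by
      ext ⟨a, b⟩
      simp only [Set.mem_setOf_eq]
      omega
    rw [hset, aux_card]
    omega
  · have hset : {p : ℕ × ℕ |
        (s + t ≤ p.1 + p.2 + s ∧ p.1 + 2 * p.2 + s = s + t + i) ∨
        (s + t ≤ p.1 + p.2 + (2 * (s + t) + 1 - s) ∧
          p.1 + 2 * p.2 + (2 * (s + t) + 1 - s) = s + t + i)} =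
        {p : ℕ × ℕ | p.1 + 2 * p.2 = t + i ∧ p.2 ≤ i} ∪
        {p : ℕ × ℕ | p.1 + 2 * p.2 = i - t - 1 ∧ p.2 ≤ i} := by
      ext ⟨a, b⟩
      simp only [Set.mem_setOf_eq, Set.mem_union]
      omega
    rw [hset, Set.ncard_union_eq ?_ (aux_fin _ _) (aux_fin _ _), aux_card, aux_card]
    · omega
    · rw [Set.disjoint_left]
      rintro ⟨a, b⟩ ⟨h1, _⟩ ⟨h2, _⟩
      simp only [Set.mem_setOf_eq] at *
      omega
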